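/- arXiv:2602.22504 — 2 statements merged into one kernel-verified Lean document; each statement's English description precedes it below -/
import Mathlib

section
/- Let μ be an orthogonal partition of the odd number 2m+1, and let k > 0 be even with μ_k ≥ μ_{k+1} + 2. Define ν by ν_j = μ_j − 2 for j ≤ k and ν_j = μ_j for j > k. Then ν is an orthogonal partition of 2(m−k)+1; if μ is special then ν is special; and if σ is a C-collapse of (ν^t)^− and τ is a C-collapse of (μ^t)^−, then τ = σ ∪ (k,k). -/
/-- `f` is a partition of `d`: weakly decreasing, finitely many nonzero terms, total sum `d`.
    Indexing is 0-based: `f j` is the `(j+1)`-st part. -/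
def IsPartitionOf (f : ℕ → ℕ) (d : ℕ) : Prop :=
  Antitone f ∧ ∃ N, (∀ j, N ≤ j → f j = 0) ∧ ∑ j ∈ Finset.range N, f j = d

/-- Transpose of a partition (0-based): `ptrans f k` = #{j : f j ≥ k+1}, i.e. `(f^t)_{k+1}`. -/
noncomputable def ptrans (f : ℕ → ℕ) : ℕ → ℕ := fun k => Nat.card {j : ℕ // k + 1 ≤ f j}

/-- Multiplicity of the part `k` in `f` (meaningful for `k > 0`). -/
noncomputable def pmult (f : ℕ → ℕ) (k : ℕ) : ℕ := Nat.card {j : ℕ // f j = k}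

/-- Orthogonal: every even positive part occurs with even multiplicity. -/
def IsOrthogonal (f : ℕ → ℕ) : Prop := ∀ k, 0 < k → Even k → Even (pmult f k)

/-- Symplectic: every odd positive part occurs with even multiplicity. -/
def IsSymplectic (f : ℕ → ℕ) : Prop := ∀ k, 0 < k → Odd k → Even (pmult f k)

/-- Dominance order for ℕ-valued sequences. -/
def NDomLE (f g : ℕ → ℕ) : Prop :=
  ∀ N, ∑ j ∈ Finset.range N, f j ≤ ∑ j ∈ Finset.range N, g j

/-- Dominance order for ℤ-valued sequences. -/
def DomLE (f g : ℕ → ℤ) : Prop :=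
  ∀ N, ∑ j ∈ Finset.range N, f j ≤ ∑ j ∈ Finset.range N, g j

/-- `ν` is the `P`-collapse of `μ` (both of total size `m`): `ν` is a partition of `m`
    satisfying `P`, `ν ≤ μ`, and every partition `σ` of `m` satisfying `P` with `σ ≤ μ`
    satisfies `σ ≤ ν`. -/
def IsCollapse (P : (ℕ → ℕ) → Prop) (m : ℕ) (μ ν : ℕ → ℕ) : Prop :=
  IsPartitionOf ν m ∧ P ν ∧ NDomLE ν μ ∧
    ∀ σ, IsPartitionOf σ m → P σ → NDomLE σ μ → NDomLE σ ν

/-- B-collapse (largest orthogonal partition below `μ`, `m` odd). -/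
def IsBCollapse : ℕ → (ℕ → ℕ) → (ℕ → ℕ) → Prop := IsCollapse IsOrthogonal
/-- C-collapse (largest symplectic partition below `μ`, `m` even). -/
def IsCCollapse : ℕ → (ℕ → ℕ) → (ℕ → ℕ) → Prop := IsCollapse IsSymplectic
/-- D-collapse (largest orthogonal partition below `μ`, `m` even). -/
def IsDCollapse : ℕ → (ℕ → ℕ) → (ℕ → ℕ) → Prop := IsCollapse IsOrthogonal

/-- `μ^−` : decrease the smallest nonzero part by 1. -/
def minusOne (f : ℕ → ℕ) : ℕ → ℕ :=
  fun j => if 0 < f j ∧ f (j+1) = 0 then f j - 1 else f j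

/-- `μ^+` : increase the largest part by 1. -/
def plusOne (f : ℕ → ℕ) : ℕ → ℕ := fun j => if j = 0 then f 0 + 1 else f j

/-- `u = f ∪ g` : `u` is weakly decreasing, finitely supported, and every positive
    part occurs in `u` with multiplicity the sum of its multiplicities in `f` and `g`. -/
def IsUnionOf (u f g : ℕ → ℕ) : Prop :=
  Antitone u ∧ (∃ N, ∀ j, N ≤ j → u j = 0) ∧
    ∀ k, 0 < k → pmult u k = pmult f k + pmult g k

/-- The sequence ξ attached to `(f, g, ε₁, ε₂, d)`.  Index `j` here corresponds to the
    1-based index `j+1` of the paper. -/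
def xiSeq (f g : ℕ → ℕ) (e1 e2 d : ℕ) : ℕ → ℤ := fun j =>
  if (j + 1) % 2 = (d + 1) % 2 ∧ f j % 2 = e1 ∧ g j % 2 = e2 ∧
      (j = 0 ∨ f j + g j < f (j - 1) + g (j - 1)) then 1
  else if (j + 1) % 2 = d % 2 ∧ f j % 2 = e1 ∧ g j % 2 = e2 ∧
      f (j + 1) + g (j + 1) < f j + g j then -1
  else 0

/-- The Waldspurger sequence `W(f,g) = f + g + ξ` (ℤ-valued a priori). -/
def wald (f g : ℕ → ℕ) (e1 e2 d : ℕ) : ℕ → ℤ :=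
  fun j => (f j : ℤ) + (g j : ℤ) + xiSeq f g e1 e2 d j

/-- Decrease the first `k` parts of `μ` by 2. -/
def stripTwo (μ : ℕ → ℕ) (k : ℕ) : ℕ → ℕ := fun j => if j < k then μ j - 2 else μ j

/-- The partition `(k,k)` with two parts equal to `k`. -/
def twoParts (k : ℕ) : ℕ → ℕ := fun j => if j < 2 then k else 0


/-!
Transposition turns "subtract `2` from each of the first `k` parts of `μ`" into "delete two
parts equal to `k` from `μᵗ`": `μᵗ` is `νᵗ` with the pair `(k, k)` inserted at position `μ_{k+1}`.
Comparing multiplicities through this gives the two orthogonality statements.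

The C-collapse of a partition `X` of an even number is explicit: its `n`-th partial sum is that of
`X`, lowered by one exactly when the partial sums of `X` from index `n` on stay odd until `X`
drops. A symplectic partition has even partial sums at the end of each block of equal parts, so a
symplectic `ρ ≤ X` cannot attain such an odd partial sum. This description is local, so inserting
an even pair `(k, k)` into `X` where `X` passes `k` inserts `(k, k)` into its C-collapse.

It remains to compare `(μᵗ)⁻` with `(νᵗ)⁻` with `(k, k)` inserted. They coincide unless the
smallest part of `μᵗ` is one of the inserted `k`'s; then they differ by moving one box, which
changes partial sums only at odd partial sums where `(μᵗ)⁻` drops. So both have the same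
symplectic partitions below them, hence the same C-collapse.
-/

def psum (f : ℕ → ℕ) (n : ℕ) : ℕ := ∑ j ∈ Finset.range n, f j

@[simp] lemma psum_zero (f : ℕ → ℕ) : psum f 0 = 0 := rfl

lemma psum_succ (f : ℕ → ℕ) (n : ℕ) : psum f (n + 1) = psum f n + f n :=
  Finset.sum_range_succ _ _

lemma psum_eq_of_le {f : ℕ → ℕ} {N n : ℕ} (hN : ∀ j, N ≤ j → f j = 0) (h : N ≤ n) :
    psum f n = psum f N := by
  induction n, h using Nat.le_induction with
  | base => rfl
  | succ n hn ih => rw [psum_succ, ih, hN n hn, add_zero]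

lemma eq_of_psum_eq {f g : ℕ → ℕ} (h : ∀ n, psum f n = psum g n) : f = g := by
  funext n
  have := h (n + 1)
  rw [psum_succ, psum_succ, h n] at this
  omega

lemma psum_add_ite_of_add_ite {f g : ℕ → ℕ} {a b : ℕ} (hab : a < b)
    (h : ∀ j, g j + (if j = a then 1 else 0) = f j + (if j = b then 1 else 0)) (n : ℕ) :
    psum g n + (if a < n ∧ n ≤ b then 1 else 0) = psum f n := by
  induction n with
  | zero => simp
  | succ n ih =>
    have := h n
    rw [psum_succ, psum_succ]
    split_ifs at * <;> omega

section Transpose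

variable {f : ℕ → ℕ} {N : ℕ}

lemma ptrans_eq_find (hf : Antitone f) {c : ℕ} (h : ∃ n, f n ≤ c) : ptrans f c = Nat.find h := by
  have hset : {j | c + 1 ≤ f j} = Set.Iio (Nat.find h) := by
    ext j
    simp only [Set.mem_ofPred_eq, Set.mem_Iio, Nat.lt_find_iff, not_le]
    exact ⟨fun hj m hm => lt_of_lt_of_le hj (hf hm), fun hj => hj j le_rfl⟩
  rw [ptrans, ← Set.coe_ofPred, hset, Nat.card_coe_set_eq, Set.ncard_Iio_nat]

lemma lt_ptrans_iff (hf : Antitone f) (hN : ∀ j, N ≤ j → f j = 0) (c j : ℕ) :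
    j < ptrans f c ↔ c + 1 ≤ f j := by
  have h : ∃ n, f n ≤ c := ⟨N, by simp [hN N le_rfl]⟩
  rw [ptrans_eq_find hf h, Nat.lt_find_iff]
  exact ⟨fun hj => not_le.mp (hj j le_rfl), fun hj m hm => not_le.mpr (lt_of_lt_of_le hj (hf hm))⟩

lemma ptrans_eq_of_iff (hf : Antitone f) (hN : ∀ j, N ≤ j → f j = 0) {c v : ℕ}
    (hv : ∀ j, j < v ↔ c + 1 ≤ f j) : ptrans f c = v :=
  eq_of_forall_lt_iff fun j => (lt_ptrans_iff hf hN c j).trans (hv j).symm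

lemma ptrans_antitone (hf : Antitone f) (hN : ∀ j, N ≤ j → f j = 0) : Antitone (ptrans f) := by
  intro a b hab
  by_contra h
  have h1 := (lt_ptrans_iff hf hN b (ptrans f a)).mp (not_le.mp h)
  have h2 := (lt_ptrans_iff hf hN a (ptrans f a)).not.mp (lt_irrefl _)
  omega

lemma ptrans_le (hf : Antitone f) (hN : ∀ j, N ≤ j → f j = 0) (c : ℕ) : ptrans f c ≤ N := by
  by_contra h
  have := (lt_ptrans_iff hf hN c N).mp (not_le.mp h)
  simp [hN N le_rfl] at this

lemma ptrans_eq_zero (hf : Antitone f) (hN : ∀ j, N ≤ j → f j = 0) {c : ℕ} (h : f 0 ≤ c) :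
    ptrans f c = 0 :=
  ptrans_eq_of_iff hf hN fun j => by have := hf (Nat.zero_le j); omega

lemma pmult_eq_ptrans_sub (hf : Antitone f) (hN : ∀ j, N ≤ j → f j = 0) {t : ℕ} (ht : 0 < t) :
    pmult f t = ptrans f (t - 1) - ptrans f t := by
  have hset : {j | f j = t} = Set.Ico (ptrans f t) (ptrans f (t - 1)) := by
    ext j
    have h1 := lt_ptrans_iff hf hN (t - 1) j
    have h2 := lt_ptrans_iff hf hN t j
    simp only [Set.mem_ofPred_eq, Set.mem_Ico]
    omega
  rw [pmult, ← Set.coe_ofPred, hset, Nat.card_coe_set_eq, Set.ncard_eq_toFinset_card',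
    Set.toFinset_Ico, Nat.card_Ico]

-- Both sides count the cells `(j, c)` of the Young diagram with `j < N`, `c < C`.
lemma psum_ptrans (hf : Antitone f) (hN : ∀ j, N ≤ j → f j = 0) {C : ℕ} (hC : f 0 ≤ C) :
    psum (ptrans f) C = psum f N := by
  have hrow : ∀ j, f j = ((Finset.range C).filter (· + 1 ≤ f j)).card := by
    intro j
    have : (Finset.range C).filter (· + 1 ≤ f j) = Finset.range (f j) := by
      ext c
      have := hf (Nat.zero_le j)
      simp only [Finset.mem_filter, Finset.mem_range]
      omega
    rw [this, Finset.card_range]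
  have hcol : ∀ c, ptrans f c = ((Finset.range N).filter (c + 1 ≤ f ·)).card := by
    intro c
    have : (Finset.range N).filter (c + 1 ≤ f ·) = Finset.range (ptrans f c) := by
      ext j
      have := ptrans_le hf hN c
      have := lt_ptrans_iff hf hN c j
      simp only [Finset.mem_filter, Finset.mem_range]
      omega
    rw [this, Finset.card_range]
  unfold psum
  rw [Finset.sum_congr rfl fun j _ => hrow j, Finset.sum_congr rfl fun c _ => hcol c]
  simp only [Finset.card_filter]
  exact Finset.sum_comm

lemma isPartitionOf_ptrans {d : ℕ} (hf : IsPartitionOf f d) : IsPartitionOf (ptrans f) d := by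
  obtain ⟨hfa, N, hN, hsum⟩ := hf
  exact ⟨ptrans_antitone hfa hN, f 0, fun _ hc => ptrans_eq_zero hfa hN hc,
    (psum_ptrans hfa hN le_rfl).trans hsum⟩

end Transpose

lemma pmult_eq_psum {f : ℕ → ℕ} {t M : ℕ} (h : ∀ j, M ≤ j → f j ≠ t) :
    pmult f t = psum (fun j => if f j = t then 1 else 0) M := by
  have hset : {j | f j = t} = ↑((Finset.range M).filter (f · = t)) := by
    ext j
    have := h j
    simp only [Set.mem_ofPred_eq, Finset.coe_filter, Finset.mem_range]
    constructor
    · intro hj; exact ⟨by by_contra hc; exact this (not_lt.mp hc) hj, hj⟩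
    · exact fun hj => hj.2
  rw [pmult, ← Set.coe_ofPred, hset, Nat.card_coe_set_eq, Set.ncard_coe_finset,
    Finset.card_filter, psum]

lemma eq_or_eq_add_one_or_exists_add_two {p j : ℕ} (h : p ≤ j) :
    j = p ∨ j = p + 1 ∨ ∃ i, p ≤ i ∧ j = i + 2 := by
  rcases lt_or_ge j (p + 2) with h' | h'
  · omega
  · exact Or.inr (Or.inr ⟨j - 2, by omega, by omega⟩)

def insertPair (v : ℕ → ℕ) (p k : ℕ) : ℕ → ℕ :=
  fun j => if j < p then v j else if j < p + 2 then k else v (j - 2)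

section InsertPair

variable {v : ℕ → ℕ} {p k : ℕ}

lemma insertPair_of_lt {j : ℕ} (h : j < p) : insertPair v p k j = v j := if_pos h

lemma insertPair_self : insertPair v p k p = k := by simp [insertPair]

lemma insertPair_succ_self : insertPair v p k (p + 1) = k := by simp [insertPair]

lemma insertPair_add_two {j : ℕ} (h : p ≤ j) : insertPair v p k (j + 2) = v j := by
  simp [insertPair, show ¬ j + 2 < p by omega, show ¬ j < p by omega]

lemma comp_insertPair (φ : ℕ → ℕ) : φ ∘ insertPair v p k = insertPair (φ ∘ v) p (φ k) := by
  funext j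
  simp only [Function.comp, insertPair]
  split_ifs <;> rfl

lemma psum_insertPair_of_le {n : ℕ} (h : n ≤ p) : psum (insertPair v p k) n = psum v n :=
  Finset.sum_congr rfl fun j hj => insertPair_of_lt (by simp at hj; omega)

lemma psum_insertPair_succ_self : psum (insertPair v p k) (p + 1) = psum v p + k := by
  rw [psum_succ, psum_insertPair_of_le le_rfl, insertPair_self]

lemma psum_insertPair_add_two {n : ℕ} (h : p ≤ n) :
    psum (insertPair v p k) (n + 2) = psum v n + 2 * k := by
  induction n, h using Nat.le_induction with
  | base => rw [psum_succ, psum_insertPair_succ_self, insertPair_succ_self]; ring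
  | succ n hn ih => rw [psum_succ, ih, insertPair_add_two hn, psum_succ]; ring

lemma antitone_insertPair (hv : Antitone v) (hlt : ∀ j < p, k ≤ v j) (hle : v p ≤ k) :
    Antitone (insertPair v p k) := by
  refine antitone_nat_of_succ_le fun n => ?_
  simp only [insertPair]
  split_ifs <;> first
    | omega
    | exact hv (by omega)
    | exact hlt n (by omega)
    | (have := hv (show p ≤ n + 1 - 2 by omega); omega)

lemma insertPair_eq_zero {N : ℕ} (hN : ∀ j, N ≤ j → v j = 0) :
    ∀ j, N + p + 2 ≤ j → insertPair v p k j = 0 := fun j hj => by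
  rw [show j = j - 2 + 2 by omega, insertPair_add_two (by omega), hN _ (by omega)]

lemma insertPair_pred (hp : 0 < p) (h : v (p - 1) = k) :
    insertPair v (p - 1) k = insertPair v p k := by
  funext j
  simp only [insertPair]
  split_ifs <;> first
    | rfl
    | omega
    | (rw [show j = p - 1 by omega]; exact h.symm)
    | (rw [show j - 2 = p - 1 by omega]; exact h)

lemma pmult_insertPair {N : ℕ} (hN : ∀ j, N ≤ j → v j = 0) {t : ℕ} (ht : 0 < t) :
    pmult (insertPair v p k) t = pmult v t + pmult (twoParts k) t := by
  rw [pmult_eq_psum (M := N + p + 2) fun j hj => by rw [insertPair_eq_zero hN j hj]; omega,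
    pmult_eq_psum (M := N + p) fun j hj => by rw [hN j (by omega)]; omega,
    pmult_eq_psum (M := 2) fun j hj => by simp [twoParts, show ¬ j < 2 by omega]; omega]
  have hcomp : (fun j => if insertPair v p k j = t then 1 else 0) =
      insertPair (fun j => if v j = t then 1 else 0) p (if k = t then 1 else 0) :=
    comp_insertPair (fun x => if x = t then 1 else 0)
  rw [hcomp, psum_insertPair_add_two (by omega)]
  simp only [psum, Finset.sum_range_succ, Finset.sum_range_zero, twoParts]
  split_ifs <;> omega

lemma isPartitionOf_insertPair {d : ℕ} (hv : IsPartitionOf v d) (hlt : ∀ j < p, k ≤ v j)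
    (hle : v p ≤ k) : IsPartitionOf (insertPair v p k) (d + 2 * k) := by
  obtain ⟨hva, N, hN, hsum⟩ := hv
  refine ⟨antitone_insertPair hva hlt hle, N + p + 2, insertPair_eq_zero hN, ?_⟩
  show psum _ _ = _
  rw [psum_insertPair_add_two (by omega), psum_eq_of_le hN (by omega)]
  exact congrArg (· + 2 * k) hsum

lemma even_pmult_twoParts {t : ℕ} (ht : 0 < t) : Even (pmult (twoParts k) t) := by
  rw [pmult_eq_psum (M := 2) fun j hj => by simp [twoParts, show ¬ j < 2 by omega]; omega]
  simp only [psum, Finset.sum_range_succ, Finset.sum_range_zero, twoParts]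
  by_cases h : k = t <;> simp [h]

lemma isUnionOf_insertPair {N D : ℕ} (hu : IsPartitionOf (insertPair v p k) D)
    (hv : ∀ j, N ≤ j → v j = 0) : IsUnionOf (insertPair v p k) v (twoParts k) :=
  ⟨hu.1, hu.2.imp fun _ h => h.1, fun _ ht => pmult_insertPair hv ht⟩

end InsertPair

section Symplectic

variable {f : ℕ → ℕ} {N : ℕ}

-- The parts equal to `t` are those with index in `[ptrans f t, ptrans f (t - 1))`.
lemma psum_ptrans_pred (hf : Antitone f) (hN : ∀ j, N ≤ j → f j = 0) {t : ℕ} (ht : 0 < t) :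
    psum f (ptrans f (t - 1)) = psum f (ptrans f t) + pmult f t * t := by
  have hab : ptrans f t ≤ ptrans f (t - 1) := ptrans_antitone hf hN (Nat.sub_le t 1)
  have hblock : ∀ n, ptrans f t ≤ n → n ≤ ptrans f (t - 1) →
      psum f n = psum f (ptrans f t) + (n - ptrans f t) * t := by
    intro n hn
    induction n, hn using Nat.le_induction with
    | base => simp
    | succ n hn ih =>
      intro hnb
      have h1 := lt_ptrans_iff hf hN t n
      have h2 := lt_ptrans_iff hf hN (t - 1) n
      rw [psum_succ, ih (by omega), show f n = t by omega, show n + 1 - ptrans f t =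
        n - ptrans f t + 1 by omega]
      ring
  rw [hblock _ hab le_rfl, pmult_eq_ptrans_sub hf hN ht]

lemma ptrans_pred_of_drop (hf : Antitone f) (hN : ∀ j, N ≤ j → f j = 0) {n : ℕ} (hn : 0 < n)
    (hdrop : f n < f (n - 1)) : ptrans f (f (n - 1) - 1) = n :=
  ptrans_eq_of_iff hf hN fun j => by
    constructor
    · intro hj; have := hf (show j ≤ n - 1 by omega); omega
    · intro hj; by_contra hc; have := hf (show n ≤ j by omega); omega

lemma drop_at_ptrans (hf : Antitone f) (hN : ∀ j, N ≤ j → f j = 0) {t : ℕ}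
    (ht : 0 < ptrans f t) : f (ptrans f t) < f (ptrans f t - 1) := by
  have h1 := (lt_ptrans_iff hf hN t (ptrans f t - 1)).mp (by omega)
  have h2 := (lt_ptrans_iff hf hN t (ptrans f t)).not.mp (lt_irrefl _)
  omega

lemma IsSymplectic.even_psum_of_drop (hs : IsSymplectic f) (hf : Antitone f)
    (hN : ∀ j, N ≤ j → f j = 0) {n : ℕ} (hn : 0 < n) (hdrop : f n < f (n - 1)) :
    Even (psum f n) := by
  induction n using Nat.strong_induction_on with
  | _ n ih =>
    set t := f (n - 1)
    have hblock := psum_ptrans_pred hf hN (show 0 < t by omega)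
    rw [ptrans_pred_of_drop hf hN hn hdrop] at hblock
    have hmul : Even (pmult f t * t) := by
      rcases Nat.even_or_odd t with he | ho
      · exact he.mul_left _
      · exact (hs t (by omega) ho).mul_right _
    have hfirst : Even (psum f (ptrans f t)) := by
      rcases Nat.eq_zero_or_pos (ptrans f t) with h0 | h0
      · simp [h0]
      · have := (lt_ptrans_iff hf hN t (n - 1)).not.mpr (by omega)
        exact ih _ (by omega) h0 (drop_at_ptrans hf hN h0)
    rw [hblock]
    exact hfirst.add hmul

lemma isSymplectic_of_even_psum_of_drop (hf : Antitone f) (hN : ∀ j, N ≤ j → f j = 0)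
    (heven : ∀ n, 0 < n → f n < f (n - 1) → Even (psum f n)) : IsSymplectic f := by
  intro t ht hodd
  have hblock := psum_ptrans_pred hf hN ht
  have hab : ptrans f t ≤ ptrans f (t - 1) := ptrans_antitone hf hN (Nat.sub_le t 1)
  rcases hab.eq_or_lt with heq | hlt
  · rw [pmult_eq_ptrans_sub hf hN ht, heq, Nat.sub_self]
    exact ⟨0, rfl⟩
  have hlast : Even (psum f (ptrans f (t - 1))) :=
    heven _ (by omega) (drop_at_ptrans hf hN (t := t - 1) (by omega))
  have hfirst : Even (psum f (ptrans f t)) := by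
    rcases Nat.eq_zero_or_pos (ptrans f t) with h0 | h0
    · simp [h0]
    · exact heven _ h0 (drop_at_ptrans hf hN h0)
  rw [hblock, Nat.even_add] at hlast
  exact (Nat.even_mul.mp (hlast.mp hfirst)).resolve_right (Nat.not_even_iff_odd.mpr hodd)

lemma IsSymplectic.eq_pred_of_odd_psum (hs : IsSymplectic f) (hf : Antitone f)
    (hN : ∀ j, N ≤ j → f j = 0) {n : ℕ} (hn : 0 < n) (hodd : Odd (psum f n)) :
    f n = f (n - 1) := by
  by_contra hne
  have hdrop : f n < f (n - 1) := lt_of_le_of_ne (hf (Nat.sub_le n 1)) hne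
  exact Nat.not_even_iff_odd.mpr hodd (hs.even_psum_of_drop hf hN hn hdrop)

end Symplectic

def OddRunToDrop (X : ℕ → ℕ) (n : ℕ) : Prop :=
  ∃ c, n ≤ c ∧ X c < X (c - 1) ∧ ∀ m, n ≤ m → m ≤ c → Odd (psum X m)

open Classical in
noncomputable def collapseDefect (X : ℕ → ℕ) (n : ℕ) : ℕ := if OddRunToDrop X n then 1 else 0

noncomputable def cCollapse (X : ℕ → ℕ) (n : ℕ) : ℕ :=
  X n + collapseDefect X n - collapseDefect X (n + 1)

section OddRunToDrop

variable {X : ℕ → ℕ} {n : ℕ}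

lemma OddRunToDrop.odd (h : OddRunToDrop X n) : Odd (psum X n) :=
  let ⟨_, hc, _, hodd⟩ := h
  hodd n le_rfl hc

lemma OddRunToDrop.of_succ (h : OddRunToDrop X (n + 1)) (ho : Odd (psum X n)) :
    OddRunToDrop X n :=
  let ⟨c, hc, hdrop, hodd⟩ := h
  ⟨c, by omega, hdrop, fun m hm hmc => (Nat.eq_or_lt_of_le hm).elim (· ▸ ho)
    fun hlt => hodd m hlt hmc⟩

lemma OddRunToDrop.succ (h : OddRunToDrop X n) (hnd : X (n - 1) ≤ X n) :
    OddRunToDrop X (n + 1) :=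
  let ⟨c, hc, hdrop, hodd⟩ := h
  have : c ≠ n := by rintro rfl; omega
  ⟨c, by omega, hdrop, fun m hm hmc => hodd m (by omega) hmc⟩

lemma oddRunToDrop_of_drop (ho : Odd (psum X n)) (hdrop : X n < X (n - 1)) :
    OddRunToDrop X n :=
  ⟨n, le_rfl, hdrop, fun _ hm hmc => le_antisymm hmc hm ▸ ho⟩

lemma oddRunToDrop_of_even_pred {N : ℕ} (hX : Antitone X) (hN : ∀ j, N ≤ j → X j = 0)
    (hD : Even (psum X N)) (hn : 0 < n) (ho : Odd (psum X n)) (he : Even (X (n - 1))) :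
    OddRunToDrop X n := by
  classical
  have hpos : 0 < X (n - 1) := by
    by_contra h0
    have hzero : ∀ j, n ≤ j → X j = 0 := fun j hj => by have := hX (show n - 1 ≤ j by omega); omega
    rw [← psum_eq_of_le hzero (le_max_right N n), psum_eq_of_le hN (le_max_left N n)] at ho
    exact Nat.not_even_iff_odd.mpr ho hD
  have hex : ∃ c, n ≤ c ∧ X c < X (n - 1) :=
    ⟨max N n, le_max_right N n, by rw [hN _ (le_max_left N n)]; exact hpos⟩
  obtain ⟨hnc, hc⟩ := Nat.find_spec hex
  have hflat : ∀ m, n ≤ m → m < Nat.find hex → X m = X (n - 1) := fun m hm hmc => by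
    have := Nat.find_min hex hmc
    have := hX (show n - 1 ≤ m by omega)
    omega
  have hodd : ∀ m, n ≤ m → m ≤ Nat.find hex → Odd (psum X m) := by
    intro m hm
    induction m, hm using Nat.le_induction with
    | base => exact fun _ => ho
    | succ m hm ih =>
      intro hmc
      rw [psum_succ, hflat m hm (by omega)]
      exact (ih (by omega)).add_even he
  refine ⟨Nat.find hex, hnc, ?_, hodd⟩
  rcases hnc.eq_or_lt with heq | hlt
  · rwa [← heq] at hc ⊢
  · rwa [hflat (Nat.find hex - 1) (by omega) (by omega)]

end OddRunToDrop

section CCollapse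

variable {X : ℕ → ℕ} {n N : ℕ}

lemma collapseDefect_eq_one_iff : collapseDefect X n = 1 ↔ OddRunToDrop X n := by
  unfold collapseDefect
  split_ifs <;> simpa

lemma collapseDefect_eq_zero_iff : collapseDefect X n = 0 ↔ ¬ OddRunToDrop X n := by
  unfold collapseDefect
  split_ifs <;> simpa

lemma collapseDefect_le_one : collapseDefect X n ≤ 1 := by
  unfold collapseDefect
  split_ifs <;> omega

lemma collapseDefect_eq_zero_of_even (h : Even (psum X n)) : collapseDefect X n = 0 :=
  collapseDefect_eq_zero_iff.mpr fun hr => Nat.not_even_iff_odd.mpr hr.odd h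

lemma collapseDefect_eq_of_iff {Y : ℕ → ℕ} {m : ℕ} (h : OddRunToDrop X n ↔ OddRunToDrop Y m) :
    collapseDefect X n = collapseDefect Y m := by
  unfold collapseDefect
  split_ifs with h1 h2 h2
  · rfl
  · exact absurd (h.mp h1) h2
  · exact absurd (h.mpr h2) h1
  · rfl

lemma collapseDefect_succ_le : collapseDefect X (n + 1) ≤ X n + collapseDefect X n := by
  by_contra! hlt
  have hle := collapseDefect_le_one (X := X) (n := n + 1)
  have hXn : X n = 0 := by omega
  have hrun : OddRunToDrop X (n + 1) := collapseDefect_eq_one_iff.mp (by omega)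
  have ho : Odd (psum X n) := by rw [← add_zero (psum X n), ← hXn, ← psum_succ]; exact hrun.odd
  have := collapseDefect_eq_one_iff.mpr (hrun.of_succ ho)
  omega

lemma psum_cCollapse (n : ℕ) : psum (cCollapse X) n + collapseDefect X n = psum X n := by
  induction n with
  | zero => simpa using collapseDefect_eq_zero_of_even (X := X) (n := 0) (by simp)
  | succ n ih =>
    have := collapseDefect_succ_le (X := X) (n := n)
    rw [psum_succ, psum_succ, cCollapse]
    omega

lemma collapseDefect_add_le (hX : Antitone X) (hN : ∀ j, N ≤ j → X j = 0)
    (hD : Even (psum X N)) :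
    X (n + 1) + 2 * collapseDefect X (n + 1) ≤
      X n + collapseDefect X n + collapseDefect X (n + 2) := by
  have hle := collapseDefect_le_one (X := X) (n := n + 1)
  have hXn : X (n + 1) ≤ X n := hX (Nat.le_succ n)
  rcases Nat.eq_zero_or_pos (collapseDefect X (n + 1)) with h0 | hpos
  · omega
  have hrun : OddRunToDrop X (n + 1) := collapseDefect_eq_one_iff.mp (by omega)
  have ho1 := hrun.odd
  have hs1 := psum_succ X n
  have hs2 : psum X (n + 2) = psum X (n + 1) + X (n + 1) := psum_succ X (n + 1)
  rw [Nat.odd_iff] at ho1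
  rcases Nat.lt_or_ge (X (n + 1) + 1) (X n) with hbig | hsmall
  · omega
  rcases hXn.eq_or_lt with heq | hlt
  · have hrun2 : OddRunToDrop X (n + 2) := hrun.succ heq.ge
    have ho2 := hrun2.odd
    rw [Nat.odd_iff] at ho2
    have hrun0 : OddRunToDrop X n := hrun.of_succ (Nat.odd_iff.mpr (by omega))
    rw [collapseDefect_eq_one_iff.mpr hrun0, collapseDefect_eq_one_iff.mpr hrun2]
    omega
  · rcases Nat.even_or_odd (psum X n) with hev | hodd
    · rw [Nat.even_iff] at hev
      have hrun2 : OddRunToDrop X (n + 2) :=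
        oddRunToDrop_of_even_pred hX hN hD (by omega) (Nat.odd_iff.mpr (by omega))
          (Nat.even_iff.mpr (show X (n + 1) % 2 = 0 by omega))
      rw [collapseDefect_eq_one_iff.mpr hrun2]
      omega
    · rw [collapseDefect_eq_one_iff.mpr (hrun.of_succ hodd)]
      omega

lemma cCollapse_antitone (hX : Antitone X) (hN : ∀ j, N ≤ j → X j = 0) (hD : Even (psum X N)) :
    Antitone (cCollapse X) :=
  antitone_nat_of_succ_le fun n => by
    have := collapseDefect_add_le (n := n) hX hN hD
    have := collapseDefect_succ_le (X := X) (n := n + 1)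
    show X (n + 1) + collapseDefect X (n + 1) - collapseDefect X (n + 2) ≤
      X n + collapseDefect X n - collapseDefect X (n + 1)
    omega

lemma collapseDefect_eq_zero_of_le (hN : ∀ j, N ≤ j → X j = 0) (hD : Even (psum X N))
    (hn : N ≤ n) : collapseDefect X n = 0 :=
  collapseDefect_eq_zero_of_even (by rwa [psum_eq_of_le hN hn])

lemma isPartitionOf_cCollapse (hX : Antitone X) (hN : ∀ j, N ≤ j → X j = 0)
    (hD : Even (psum X N)) : IsPartitionOf (cCollapse X) (psum X N) := by
  refine ⟨cCollapse_antitone hX hN hD, N, fun j hj => ?_, ?_⟩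
  · simp [cCollapse, hN j hj, collapseDefect_eq_zero_of_le hN hD hj]
  · have := psum_cCollapse (X := X) N
    rw [collapseDefect_eq_zero_of_le hN hD le_rfl] at this
    exact this

lemma even_psum_cCollapse_of_drop (hX : Antitone X) (hN : ∀ j, N ≤ j → X j = 0)
    (hD : Even (psum X N)) (hn : 0 < n) (hdrop : cCollapse X n < cCollapse X (n - 1)) :
    Even (psum (cCollapse X) n) := by
  have hsum := psum_cCollapse (X := X) n
  have hle := collapseDefect_le_one (X := X) (n := n)
  rcases Nat.even_or_odd (psum X n) with hev | hodd
  · rw [collapseDefect_eq_zero_of_even hev] at hsum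
    rwa [← hsum, add_zero] at hev
  by_cases hrun : OddRunToDrop X n
  · rw [collapseDefect_eq_one_iff.mpr hrun] at hsum
    rw [Nat.odd_iff] at hodd
    exact Nat.even_iff.mpr (by omega)
  exfalso
  have hXodd : Odd (X (n - 1)) :=
    Nat.not_even_iff_odd.mp fun he => hrun (oddRunToDrop_of_even_pred hX hN hD hn hodd he)
  have hflat : X n = X (n - 1) := by
    by_contra hne
    exact hrun (oddRunToDrop_of_drop hodd (lt_of_le_of_ne (hX (Nat.sub_le n 1)) hne))
  have hs1 := psum_succ X n
  have hs0 := psum_succ X (n - 1)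
  rw [Nat.sub_add_cancel hn] at hs0
  rw [Nat.odd_iff] at hodd hXodd
  have h1 := collapseDefect_eq_zero_of_even (X := X) (n := n + 1) (Nat.even_iff.mpr (by omega))
  have h2 := collapseDefect_eq_zero_of_even (X := X) (n := n - 1) (Nat.even_iff.mpr (by omega))
  have h0 := collapseDefect_eq_zero_iff.mpr hrun
  unfold cCollapse at hdrop
  rw [Nat.sub_add_cancel hn] at hdrop
  omega

lemma isSymplectic_cCollapse (hX : Antitone X) (hN : ∀ j, N ≤ j → X j = 0)
    (hD : Even (psum X N)) : IsSymplectic (cCollapse X) := by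
  obtain ⟨ha, M, hM, -⟩ := isPartitionOf_cCollapse hX hN hD
  exact isSymplectic_of_even_psum_of_drop ha hM fun n hn hdrop =>
    even_psum_cCollapse_of_drop hX hN hD hn hdrop

lemma psum_succ_eq_of_psum_eq {ρ : ℕ → ℕ} (hρX : NDomLE ρ X) (hX : Antitone X) (hn : 0 < n)
    (hρn : ρ n = ρ (n - 1)) (heq : psum ρ n = psum X n) :
    psum ρ (n + 1) = psum X (n + 1) ∧ X n = X (n - 1) := by
  have hρ0 := psum_succ ρ (n - 1)
  have hX0 := psum_succ X (n - 1)
  rw [Nat.sub_add_cancel hn] at hρ0 hX0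
  have h0 : psum ρ (n - 1) ≤ psum X (n - 1) := hρX (n - 1)
  have h1 : psum ρ (n + 1) ≤ psum X (n + 1) := hρX (n + 1)
  have := hX (Nat.sub_le n 1)
  rw [psum_succ, psum_succ] at h1 ⊢
  omega

-- A symplectic `ρ` can only attain an odd partial sum of `X` inside a block of equal parts,
-- which forces `ρ` to keep matching `X` along the run, so `X` cannot drop at its end.
lemma psum_lt_of_oddRunToDrop {ρ : ℕ → ℕ} {M : ℕ} (hρs : IsSymplectic ρ) (hρ : Antitone ρ)
    (hM : ∀ j, M ≤ j → ρ j = 0) (hρX : NDomLE ρ X) (hX : Antitone X)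
    (hrun : OddRunToDrop X n) : psum ρ n < psum X n := by
  obtain ⟨c, hnc, hdrop, hodd⟩ := hrun
  by_contra! hge
  have hstep : ∀ m, n ≤ m → m ≤ c →
      psum ρ m = psum X m → psum ρ (m + 1) = psum X (m + 1) ∧ X m = X (m - 1) := by
    intro m hm hmc heq
    have hm0 : 0 < m := Nat.pos_of_ne_zero fun h => by simpa [h] using hodd m hm hmc
    have hρm := hρs.eq_pred_of_odd_psum hρ hM hm0 (heq ▸ hodd m hm hmc)
    exact psum_succ_eq_of_psum_eq hρX hX hm0 hρm heq
  have hmatch : ∀ m, n ≤ m → m ≤ c → psum ρ m = psum X m := by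
    intro m hm
    induction m, hm using Nat.le_induction with
    | base => exact fun _ => le_antisymm (hρX n) hge
    | succ m hm ih => exact fun hmc => (hstep m hm (by omega) (ih (by omega))).1
  have := (hstep c hnc le_rfl (hmatch c hnc le_rfl)).2
  omega

lemma NDomLE.of_psum_eq_or_odd_drop {ρ X Y : ℕ → ℕ} {M : ℕ} (hρX : NDomLE ρ X)
    (hρs : IsSymplectic ρ) (hρ : Antitone ρ) (hM : ∀ j, M ≤ j → ρ j = 0) (hX : Antitone X)
    (h : ∀ n, psum Y n = psum X n ∨
      psum Y n + 1 = psum X n ∧ Odd (psum X n) ∧ X n < X (n - 1)) : NDomLE ρ Y := fun n => by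
  show psum ρ n ≤ psum Y n
  rcases h n with heq | ⟨heq, ho, hd⟩
  · exact (hρX n).trans_eq heq.symm
  · have := psum_lt_of_oddRunToDrop hρs hρ hM hρX hX (oddRunToDrop_of_drop ho hd)
    omega

theorem isCCollapse_cCollapse (hX : Antitone X) (hN : ∀ j, N ≤ j → X j = 0)
    (hD : Even (psum X N)) : IsCCollapse (psum X N) X (cCollapse X) := by
  refine ⟨isPartitionOf_cCollapse hX hN hD, isSymplectic_cCollapse hX hN hD, fun n => ?_, ?_⟩
  · exact Nat.le.intro (psum_cCollapse n)
  · rintro σ ⟨hσ, M, hM, -⟩ hσs hσX n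
    have hsum := psum_cCollapse (X := X) n
    show psum σ n ≤ psum (cCollapse X) n
    by_cases hrun : OddRunToDrop X n
    · have := psum_lt_of_oddRunToDrop hσs hσ hM hσX hX hrun
      rw [collapseDefect_eq_one_iff.mpr hrun] at hsum
      omega
    · rw [collapseDefect_eq_zero_iff.mpr hrun] at hsum
      exact (hσX n).trans_eq hsum.symm

end CCollapse

lemma IsCollapse.unique {P : (ℕ → ℕ) → Prop} {m : ℕ} {μ ν ν' : ℕ → ℕ}
    (h : IsCollapse P m μ ν) (h' : IsCollapse P m μ ν') : ν = ν' :=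
  eq_of_psum_eq fun n =>
    le_antisymm (h'.2.2.2 ν h.1 h.2.1 h.2.2.1 n) (h.2.2.2 ν' h'.1 h'.2.1 h'.2.2.1 n)

lemma IsCCollapse.eq_cCollapse {X σ : ℕ → ℕ} {d : ℕ} (hX : IsPartitionOf X d) (hd : Even d)
    (h : IsCCollapse d X σ) : σ = cCollapse X := by
  obtain ⟨hXa, N, hN, hsum⟩ := hX
  have hsum : psum X N = d := hsum
  subst hsum
  exact h.unique (isCCollapse_cCollapse hXa hN hd)

lemma IsCollapse.of_ndomLE_iff {P : (ℕ → ℕ) → Prop} {m : ℕ} {μ μ' ν : ℕ → ℕ}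
    (h : ∀ σ, IsPartitionOf σ m → P σ → (NDomLE σ μ ↔ NDomLE σ μ')) (hν : IsCollapse P m μ ν) :
    IsCollapse P m μ' ν :=
  ⟨hν.1, hν.2.1, (h ν hν.1 hν.2.1).mp hν.2.2.1,
    fun σ hσ hσP hσμ' => hν.2.2.2 σ hσ hσP ((h σ hσ hσP).mpr hσμ')⟩

section CollapseInsertPair

variable {A : ℕ → ℕ} {p k n : ℕ}

lemma oddRunToDrop_iff_of_drop {X : ℕ → ℕ} (hdrop : X p < X (p - 1)) (hn : n ≤ p) :
    OddRunToDrop X n ↔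
      ∃ c, n ≤ c ∧ c ≤ p ∧ X c < X (c - 1) ∧ ∀ m, n ≤ m → m ≤ c → Odd (psum X m) := by
  constructor
  · rintro ⟨c, hnc, hcdrop, hodd⟩
    rcases le_or_gt c p with hcp | hpc
    · exact ⟨c, hnc, hcp, hcdrop, hodd⟩
    · exact ⟨p, hn, le_rfl, hdrop, fun m hm hmp => hodd m hm (by omega)⟩
  · rintro ⟨c, hnc, -, hcdrop, hodd⟩
    exact ⟨c, hnc, hcdrop, hodd⟩

lemma oddRunToDrop_congr_of_drop {X Y : ℕ → ℕ} (hXY : ∀ j < p, X j = Y j)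
    (hX : X p < X (p - 1)) (hY : Y p < Y (p - 1)) (hn : n ≤ p) :
    OddRunToDrop X n ↔ OddRunToDrop Y n := by
  have hpsum : ∀ m ≤ p, psum X m = psum Y m := fun m hm =>
    Finset.sum_congr rfl fun j hj => hXY j (by simp at hj; omega)
  rw [oddRunToDrop_iff_of_drop hX hn, oddRunToDrop_iff_of_drop hY hn]
  refine exists_congr fun c => and_congr_right fun hnc => and_congr_right fun hcp => ?_
  have hdrop : X c < X (c - 1) ↔ Y c < Y (c - 1) := by
    rcases hcp.eq_or_lt with rfl | hlt
    · exact iff_of_true hX hY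
    · rw [hXY c hlt, hXY (c - 1) (by omega)]
  rw [hdrop]
  refine and_congr_right fun _ => forall₂_congr fun m hm => imp_congr_right fun hmc => ?_
  rw [hpsum m (by omega)]

lemma oddRunToDrop_insertPair_add_two_iff (hn : p < n) :
    OddRunToDrop (insertPair A p k) (n + 2) ↔ OddRunToDrop A n := by
  have hodd : ∀ m, p ≤ m → (Odd (psum (insertPair A p k) (m + 2)) ↔ Odd (psum A m)) :=
    fun m hm => by simp [psum_insertPair_add_two hm, Nat.odd_add]
  constructor
  · rintro ⟨c, hc, hdrop, hrun⟩
    refine ⟨c - 2, by omega, ?_, fun m hm hmc => (hodd m (by omega)).mp (hrun _ (by omega) (by omega))⟩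
    rwa [show c = c - 2 + 2 by omega, show c - 2 + 2 - 1 = c - 2 - 1 + 2 by omega,
      insertPair_add_two (by omega), insertPair_add_two (by omega)] at hdrop
  · rintro ⟨c, hc, hdrop, hrun⟩
    refine ⟨c + 2, by omega, ?_, fun m hm hmc => ?_⟩
    · rwa [show c + 2 - 1 = c - 1 + 2 by omega, insertPair_add_two (by omega),
        insertPair_add_two (by omega)]
    · rw [show m = m - 2 + 2 by omega]
      exact (hodd _ (by omega)).mpr (hrun _ (by omega) (by omega))

variable {N : ℕ}

lemma collapseDefect_insertPair_of_le (hgt : ∀ j < p, k < A j) (hle : A p ≤ k) (hn : n ≤ p) :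
    collapseDefect (insertPair A p k) n = collapseDefect A n := by
  rcases Nat.eq_zero_or_pos p with rfl | hp
  · obtain rfl : n = 0 := by omega
    rw [collapseDefect_eq_zero_of_even (by simp), collapseDefect_eq_zero_of_even (by simp)]
  have hkp := hgt (p - 1) (by omega)
  refine collapseDefect_eq_of_iff (oddRunToDrop_congr_of_drop (fun j hj => insertPair_of_lt hj)
    ?_ (by omega) hn)
  rw [insertPair_self, insertPair_of_lt (by omega)]
  exact hkp

lemma collapseDefect_insertPair_add_two (hn : p < n) :
    collapseDefect (insertPair A p k) (n + 2) = collapseDefect A n :=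
  collapseDefect_eq_of_iff (oddRunToDrop_insertPair_add_two_iff hn)

lemma collapseDefect_insertPair_succ_self_and_add_two_self (hA : Antitone A)
    (hN : ∀ j, N ≤ j → A j = 0) (hD : Even (psum A N)) (hk : Even k)
    (hgt : ∀ j < p, k < A j) (hle : A p ≤ k) :
    collapseDefect (insertPair A p k) (p + 1) = collapseDefect A p ∧
      collapseDefect (insertPair A p k) (p + 2) = collapseDefect A p := by
  have h1 : psum (insertPair A p k) (p + 1) = psum A p + k := psum_insertPair_succ_self
  have h2 : psum (insertPair A p k) (p + 2) = psum A p + 2 * k := psum_insertPair_add_two le_rfl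
  rcases Nat.even_or_odd (psum A p) with hev | hodd
  · rw [collapseDefect_eq_zero_of_even hev, collapseDefect_eq_zero_of_even (by rw [h1]; exact hev.add hk),
      collapseDefect_eq_zero_of_even (by rw [h2]; exact hev.add (even_two_mul k))]
    exact ⟨rfl, rfl⟩
  have hp : 0 < p := Nat.pos_of_ne_zero fun h => by simp [h] at hodd
  have hB := antitone_insertPair hA (fun j hj => (hgt j hj).le) hle
  have hBN := insertPair_eq_zero (p := p) (k := k) hN
  have hBD : Even (psum (insertPair A p k) (N + p + 2)) := by
    rw [psum_insertPair_add_two (by omega), psum_eq_of_le hN (by omega)]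
    exact hD.add (even_two_mul k)
  have hA1 : collapseDefect A p = 1 := collapseDefect_eq_one_iff.mpr
    (oddRunToDrop_of_drop hodd (by have := hgt (p - 1) (by omega); omega))
  rw [hA1, collapseDefect_eq_one_iff, collapseDefect_eq_one_iff]
  constructor
  · refine oddRunToDrop_of_even_pred hB hBN hBD (by omega) (by rw [h1]; exact hodd.add_even hk) ?_
    rwa [Nat.add_sub_cancel, insertPair_self]
  · refine oddRunToDrop_of_even_pred hB hBN hBD (by omega)
      (by rw [h2]; exact hodd.add_even (even_two_mul k)) ?_
    rwa [show p + 2 - 1 = p + 1 by omega, insertPair_succ_self]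

theorem cCollapse_insertPair (hA : Antitone A) (hN : ∀ j, N ≤ j → A j = 0)
    (hD : Even (psum A N)) (hk : Even k) (hgt : ∀ j < p, k < A j) (hle : A p ≤ k) :
    cCollapse (insertPair A p k) = insertPair (cCollapse A) p k := by
  obtain ⟨hsucc, hadd⟩ :=
    collapseDefect_insertPair_succ_self_and_add_two_self hA hN hD hk hgt hle
  refine eq_of_psum_eq fun n => ?_
  have hB := psum_cCollapse (X := insertPair A p k) n
  rcases le_or_gt n p with hn | hn
  · have := psum_cCollapse (X := A) n
    rw [psum_insertPair_of_le hn, collapseDefect_insertPair_of_le hgt hle hn] at hB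
    rw [psum_insertPair_of_le hn]
    omega
  obtain rfl | ⟨m, hm, rfl⟩ : n = p + 1 ∨ ∃ m, p ≤ m ∧ n = m + 2 :=
    (Nat.eq_or_lt_of_le hn).imp Eq.symm fun h => ⟨n - 2, by omega, by omega⟩
  · have := psum_cCollapse (X := A) p
    rw [psum_insertPair_succ_self, hsucc] at hB
    rw [psum_insertPair_succ_self]
    omega
  · have := psum_cCollapse (X := A) m
    have hdd : collapseDefect (insertPair A p k) (m + 2) = collapseDefect A m := by
      rcases hm.eq_or_lt with rfl | hlt
      · exact hadd
      · exact collapseDefect_insertPair_add_two hlt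
    rw [psum_insertPair_add_two hm, hdd] at hB
    rw [psum_insertPair_add_two hm]
    omega

theorem exists_cCollapse_insertPair (hA : Antitone A) (hN : ∀ j, N ≤ j → A j = 0)
    (hD : Even (psum A N)) (hk : Even k) (hge : ∀ j < p, k ≤ A j) (hle : A p ≤ k) :
    ∃ q, cCollapse (insertPair A p k) = insertPair (cCollapse A) q k := by
  induction p with
  | zero => exact ⟨0, cCollapse_insertPair hA hN hD hk (by simp) hle⟩
  | succ p ih =>
    rcases (hge p (Nat.lt_succ_self p)).lt_or_eq with hlt | heq
    · exact ⟨p + 1, cCollapse_insertPair hA hN hD hk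
        (fun j hj => hlt.trans_le (hA (Nat.le_of_lt_succ hj))) hle⟩
    · rw [← insertPair_pred (Nat.succ_pos p) heq.symm]
      exact ih (fun j hj => hge j (by omega)) heq.ge

end CollapseInsertPair

section MinusOne

variable {f : ℕ → ℕ} {j N : ℕ}

lemma minusOne_of_pos (h : 0 < f (j + 1)) : minusOne f j = f j := by
  simp [minusOne, h.ne']

lemma minusOne_of_eq_zero (h : f (j + 1) = 0) : minusOne f j = f j - 1 := by
  by_cases h0 : f j = 0 <;> simp [minusOne, h, h0, Nat.pos_of_ne_zero]

lemma minusOne_le : minusOne f j ≤ f j := by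
  unfold minusOne
  split_ifs <;> omega

lemma le_minusOne_add_one : f j ≤ minusOne f j + 1 := by
  unfold minusOne
  split_ifs <;> omega

lemma minusOne_antitone (hf : Antitone f) : Antitone (minusOne f) :=
  antitone_nat_of_succ_le fun n => by
    have : f (n + 1) ≤ f n := hf (Nat.le_succ n)
    unfold minusOne
    split_ifs <;> omega

lemma minusOne_add_ite (hf : Antitone f) (hN : ∀ j, N ≤ j → f j = 0) (j : ℕ) :
    minusOne f j + (if j + 1 = ptrans f 0 then 1 else 0) = f j := by
  have h0 := lt_ptrans_iff hf hN 0 j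
  have h1 := lt_ptrans_iff hf hN 0 (j + 1)
  unfold minusOne
  split_ifs <;> omega

lemma psum_minusOne_add_one (hf : Antitone f) (hN : ∀ j, N ≤ j → f j = 0) (hpos : 0 < f 0) :
    psum (minusOne f) N + 1 = psum f N := by
  have h0 : 0 < ptrans f 0 := (lt_ptrans_iff hf hN 0 0).mpr hpos
  have key : ∀ n, psum (minusOne f) n + (if ptrans f 0 ≤ n then 1 else 0) = psum f n := by
    intro n
    induction n with
    | zero => simp; omega
    | succ n ih =>
      have := minusOne_add_ite hf hN n
      rw [psum_succ, psum_succ]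
      split_ifs at * <;> omega
  simpa [ptrans_le hf hN 0] using key N

lemma isPartitionOf_minusOne {d : ℕ} (hf : IsPartitionOf f (d + 1)) : IsPartitionOf (minusOne f) d := by
  obtain ⟨hfa, N, hN, hsum⟩ := hf
  have hpos : 0 < f 0 := Nat.pos_of_ne_zero fun h => by
    have hzero : ∀ j, 0 ≤ j → f j = 0 := fun j _ => by have := hfa (Nat.zero_le j); omega
    have : psum f N = 0 := psum_eq_of_le hzero (Nat.zero_le N)
    unfold psum at this
    omega
  refine ⟨minusOne_antitone hfa, N, fun j hj => Nat.le_zero.mp (minusOne_le.trans_eq (hN j hj)), ?_⟩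
  have := psum_minusOne_add_one hfa hN hpos
  unfold psum at this
  omega

variable {P : ℕ → ℕ} {p k : ℕ}

lemma minusOne_insertPair_of_pos (hPa : Antitone P) (hP : 0 < P p) (hk : 0 < k) :
    minusOne (insertPair P p k) = insertPair (minusOne P) p k := by
  funext j
  have hpos : ∀ i ≤ p, 0 < P i := fun i hi => hP.trans_le (hPa hi)
  rcases lt_or_ge j p with hj | hj
  · rw [insertPair_of_lt hj, minusOne_of_pos, insertPair_of_lt hj, minusOne_of_pos (hpos _ hj)]
    rcases (show j + 1 ≤ p from hj).lt_or_eq with h | h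
    · rw [insertPair_of_lt h]; exact hpos _ h.le
    · rw [h, insertPair_self]; exact hk
  obtain rfl | rfl | ⟨i, hi, rfl⟩ := eq_or_eq_add_one_or_exists_add_two hj
  · rw [minusOne_of_pos (by rwa [insertPair_succ_self]), insertPair_self, insertPair_self]
  · rw [minusOne_of_pos (by rwa [show p + 1 + 1 = p + 2 by rfl, insertPair_add_two le_rfl]),
      insertPair_succ_self, insertPair_succ_self]
  · unfold minusOne
    rw [show i + 2 + 1 = i + 1 + 2 by rfl, insertPair_add_two hi, insertPair_add_two hi,
      insertPair_add_two (hi.trans (Nat.le_succ i))]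

lemma minusOne_insertPair_of_eq_zero (hPa : Antitone P) (hp : 0 < p) (hPp : P p = 0)
    (hkP : k < P (p - 1)) (hk : 0 < k) :
    (∀ j < p, minusOne (insertPair P p k) j = P j) ∧ minusOne (insertPair P p k) p = k ∧
      minusOne (insertPair P p k) (p + 1) = k - 1 ∧
      ∀ j, p + 2 ≤ j → minusOne (insertPair P p k) j = 0 := by
  refine ⟨fun j hj => ?_, ?_, ?_, fun j hj => ?_⟩
  · rw [minusOne_of_pos, insertPair_of_lt hj]
    rcases (show j + 1 ≤ p from hj).lt_or_eq with h | h
    · rw [insertPair_of_lt h]; exact (Nat.zero_le k).trans_lt (hkP.trans_le (hPa (by omega)))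
    · rw [h, insertPair_self]; exact hk
  · rw [minusOne_of_pos (by rwa [insertPair_succ_self]), insertPair_self]
  · rw [minusOne_of_eq_zero (by rw [show p + 1 + 1 = p + 2 by rfl, insertPair_add_two le_rfl, hPp]),
      insertPair_succ_self]
  · have hle := minusOne_le (f := insertPair P p k) (j := j)
    have hzero : insertPair P p k j = 0 := by
      rw [show j = j - 2 + 2 by omega, insertPair_add_two (by omega)]
      have := hPa (show p ≤ j - 2 by omega)
      omega
    omega

lemma insertPair_minusOne_add_ite (hPa : Antitone P) (hp : 0 < p) (hPp : P p = 0)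
    (hkP : k < P (p - 1)) (hk : 0 < k) (j : ℕ) :
    insertPair (minusOne P) p k j + (if j = p - 1 then 1 else 0) =
      minusOne (insertPair P p k) j + (if j = p + 1 then 1 else 0) := by
  obtain ⟨hlt, hself, hsucc, hzero⟩ := minusOne_insertPair_of_eq_zero hPa hp hPp hkP hk
  rcases lt_or_ge j p with hj | hj
  · rw [insertPair_of_lt hj, hlt j hj]
    rcases (show j + 1 ≤ p from hj).lt_or_eq with h | h
    · rw [minusOne_of_pos ((Nat.zero_le k).trans_lt (hkP.trans_le (hPa (by omega))))]
      simp [show j ≠ p - 1 by omega, show j ≠ p + 1 by omega]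
    · have hj' : j = p - 1 := by omega
      rw [hj', minusOne_of_eq_zero (by rwa [Nat.sub_add_cancel hp])]
      simp only [if_true, show p - 1 ≠ p + 1 by omega, if_false]
      omega
  obtain h | h | ⟨i, hi, rfl⟩ := eq_or_eq_add_one_or_exists_add_two hj
  · rw [h]
    simp [insertPair_self, hself, show p ≠ p - 1 by omega]
  · rw [h]
    simp [insertPair_succ_self, hsucc, show p + 1 ≠ p - 1 by omega]
    omega
  · have := minusOne_le (f := P) (j := i)
    have := hPa hi
    rw [insertPair_add_two hi, hzero _ (by omega)]
    simp [show i + 2 ≠ p - 1 by omega, show i + 2 ≠ p + 1 by omega]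
    omega

end MinusOne

theorem IsCCollapse.insertPair_minusOne_of_eq_zero {P τ : ℕ → ℕ} {p k D : ℕ}
    (hτ : IsCCollapse D (minusOne (insertPair P p k)) τ) (hPa : Antitone P) (hp : 0 < p)
    (hPp : P p = 0) (hodd : Odd (psum P p)) (hk : Even k) (hk0 : 0 < k) (hkP : k < P (p - 1)) :
    IsCCollapse D (insertPair (minusOne P) p k) τ := by
  obtain ⟨hlt, hself, hsucc, -⟩ := minusOne_insertPair_of_eq_zero hPa hp hPp hkP hk0
  have hmove := psum_add_ite_of_add_ite (by omega : p - 1 < p + 1)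
    (insertPair_minusOne_add_ite hPa hp hPp hkP hk0)
  set B := minusOne (insertPair P p k)
  have hB : Antitone B := minusOne_antitone
    (antitone_insertPair hPa (fun j hj => (hkP.trans_le (hPa (by omega))).le) (by omega))
  have hpsum : psum B p = psum P p := Finset.sum_congr rfl fun j hj => hlt j (by simpa using hj)
  have hdrop : ∀ n, p ≤ n → n ≤ p + 1 → Odd (psum B n) ∧ B n < B (n - 1) := by
    intro n hpn hnp
    rcases hpn.eq_or_lt with rfl | h
    · rw [hpsum, hself, hlt _ (by omega)]
      exact ⟨hodd, hkP⟩
    · obtain rfl : n = p + 1 := by omega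
      rw [psum_succ, hpsum, hself, hsucc, Nat.add_sub_cancel]
      exact ⟨hodd.add_even hk, by omega⟩
  refine IsCollapse.of_ndomLE_iff (fun σ ⟨hσ, M, hM, _⟩ hσs => ⟨fun hσB =>
    hσB.of_psum_eq_or_odd_drop hσs hσ hM hB fun n => ?_, fun hσB' n => ?_⟩) hτ
  · have hn := hmove n
    split_ifs at hn with hnp
    · exact Or.inr ⟨hn, hdrop n (by omega) hnp.2⟩
    · exact Or.inl hn
  · have hn := hmove n
    have hσn : psum σ n ≤ psum (insertPair (minusOne P) p k) n := hσB' n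
    show psum σ n ≤ psum B n
    split_ifs at hn <;> omega

theorem IsCCollapse.insertPair_minusOne {P τ : ℕ → ℕ} {p k d D : ℕ}
    (hτ : IsCCollapse D (minusOne (insertPair P p k)) τ) (hP : IsPartitionOf P d) (hd : Odd d)
    (hk : Even k) (hk0 : 0 < k) (hkP : 0 < p → k < P (p - 1)) :
    IsCCollapse D (insertPair (minusOne P) p k) τ := by
  obtain ⟨hPa, N, hN, hsum⟩ := hP
  rcases Nat.eq_zero_or_pos (P p) with hPp | hPp
  · have hz : ∀ j, p ≤ j → P j = 0 := fun j hj => by have := hPa hj; omega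
    have hodd : Odd (psum P p) := by
      rw [← psum_eq_of_le hz (le_max_right N p), psum_eq_of_le hN (le_max_left N p)]
      exact (show psum P N = d from hsum) ▸ hd
    have hp : 0 < p := Nat.pos_of_ne_zero fun h => by simp [h] at hodd
    exact hτ.insertPair_minusOne_of_eq_zero hPa hp hPp hodd hk hk0 (hkP hp)
  · rwa [← minusOne_insertPair_of_pos hPa hPp hk0]

theorem isUnionOf_of_isCCollapse_minusOne_insertPair {P σ τ : ℕ → ℕ} {p k n : ℕ}
    (hP : IsPartitionOf P (2 * n + 1)) (hke : Even k) (hk : 0 < k) (hkP : ∀ j < p, k < P j)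
    (hPp : P p ≤ k) (hσ : IsCCollapse (2 * n) (minusOne P) σ)
    (hτ : IsCCollapse (2 * (n + k)) (minusOne (insertPair P p k)) τ) :
    IsUnionOf τ σ (twoParts k) := by
  have hA := isPartitionOf_minusOne hP
  have hkA : ∀ j < p, k ≤ minusOne P j := fun j hj => by
    have := hkP j hj
    have := le_minusOne_add_one (f := P) (j := j)
    omega
  have hAp : minusOne P p ≤ k := minusOne_le.trans hPp
  have hB := isPartitionOf_insertPair hA hkA hAp
  rw [mul_add] at hτ
  have hσA := hσ.eq_cCollapse hA (even_two_mul n)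
  have hτB := (hτ.insertPair_minusOne hP (odd_two_mul_add_one n) hke hk
    fun h => hkP _ (by omega)).eq_cCollapse hB ((even_two_mul n).add (even_two_mul k))
  obtain ⟨hAa, N, hAN, hAsum⟩ := hA
  obtain ⟨q, hq⟩ := exists_cCollapse_insertPair hAa hAN
    (by rw [show psum (minusOne P) N = 2 * n from hAsum]; exact even_two_mul n) hke hkA hAp
  subst hσA
  rw [hτB, hq] at hτ ⊢
  obtain ⟨-, M, hM, -⟩ := hσ.1
  exact isUnionOf_insertPair hτ.1 hM

section StripTwo

variable {μ : ℕ → ℕ} {k N : ℕ}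

lemma add_two_le_of_lt (hμ : Antitone μ) (hstep : μ k + 2 ≤ μ (k - 1)) {j : ℕ} (hj : j < k) :
    μ k + 2 ≤ μ j :=
  hstep.trans (hμ (by omega))

lemma stripTwo_antitone (hμ : Antitone μ) (hstep : μ k + 2 ≤ μ (k - 1)) :
    Antitone (stripTwo μ k) :=
  antitone_nat_of_succ_le fun n => by
    have : μ (n + 1) ≤ μ n := hμ (Nat.le_succ n)
    unfold stripTwo
    split_ifs <;> first
      | omega
      | (have := add_two_le_of_lt hμ hstep (show n < k by omega)
         have := hμ (show k ≤ n + 1 by omega)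
         omega)

lemma stripTwo_eq_zero (hN : ∀ j, N ≤ j → μ j = 0) (j : ℕ) (hj : N ≤ j) : stripTwo μ k j = 0 := by
  simp [stripTwo, hN j hj]

lemma psum_stripTwo (hμ : Antitone μ) (hstep : μ k + 2 ≤ μ (k - 1)) (n : ℕ) :
    psum (stripTwo μ k) n + 2 * min n k = psum μ n := by
  induction n with
  | zero => simp
  | succ n ih =>
    rw [psum_succ, psum_succ, ← ih]
    unfold stripTwo
    split_ifs with h
    · have := add_two_le_of_lt hμ hstep h
      rw [show min (n + 1) k = min n k + 1 by omega]
      omega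
    · rw [show min (n + 1) k = min n k by omega]
      omega

theorem isPartitionOf_stripTwo {m : ℕ} (hμ : Antitone μ) (hN : ∀ j, N ≤ j → μ j = 0)
    (hsum : psum μ N = 2 * m + 1) (hstep : μ k + 2 ≤ μ (k - 1)) :
    k ≤ m ∧ IsPartitionOf (stripTwo μ k) (2 * (m - k) + 1) := by
  have hkN : k ≤ N := by
    by_contra h
    have := hN (k - 1) (by omega)
    omega
  have hN' := psum_stripTwo hμ hstep N
  rw [min_eq_right hkN, hsum] at hN'
  have hkm : k ≤ m := by omega
  exact ⟨hkm, stripTwo_antitone hμ hstep, N, stripTwo_eq_zero hN, by unfold psum at hN'; omega⟩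

theorem ptrans_eq_insertPair_ptrans_stripTwo (hμ : Antitone μ) (hN : ∀ j, N ≤ j → μ j = 0)
    (hstep : μ k + 2 ≤ μ (k - 1)) :
    ptrans μ = insertPair (ptrans (stripTwo μ k)) (μ k) k := by
  funext c
  refine eq_of_forall_lt_iff fun j => ?_
  have hν := lt_ptrans_iff (stripTwo_antitone hμ hstep) (stripTwo_eq_zero (k := k) hN)
  have hlt := fun hj : j < k => add_two_le_of_lt hμ hstep hj
  have hge := fun hj : k ≤ j => hμ hj
  have hs : stripTwo μ k j = if j < k then μ j - 2 else μ j := rfl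
  rw [lt_ptrans_iff hμ hN]
  rcases lt_or_ge c (μ k) with hc | hc
  · rw [insertPair_of_lt hc, hν]
    split_ifs at hs <;> omega
  obtain rfl | rfl | ⟨i, hi, rfl⟩ := eq_or_eq_add_one_or_exists_add_two hc
  · rw [insertPair_self]
    by_cases j < k <;> omega
  · rw [insertPair_succ_self]
    by_cases j < k <;> omega
  · rw [insertPair_add_two hi, hν]
    split_ifs at hs <;> omega

theorem isOrthogonal_stripTwo (hμ : Antitone μ) (hN : ∀ j, N ≤ j → μ j = 0)
    (hμo : IsOrthogonal μ) (hstep : μ k + 2 ≤ μ (k - 1)) : IsOrthogonal (stripTwo μ k) := by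
  intro t ht hte
  have hT := congrFun (ptrans_eq_insertPair_ptrans_stripTwo hμ hN hstep)
  have h1 := hμo t ht hte
  have h2 := hμo (t + 2) (by omega) (hte.add even_two)
  rw [pmult_eq_ptrans_sub hμ hN ht] at h1
  rw [pmult_eq_ptrans_sub hμ hN (by omega), show t + 2 - 1 = t + 1 by omega] at h2
  rw [pmult_eq_ptrans_sub (stripTwo_antitone hμ hstep) (stripTwo_eq_zero hN) ht]
  rw [Nat.even_iff] at *
  rcases lt_trichotomy t (μ k) with h | h | h
  · rwa [hT, hT, insertPair_of_lt h, insertPair_of_lt (by omega)] at h1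
  · have e1 : ptrans μ (t - 1) = ptrans (stripTwo μ k) (t - 1) := by
      rw [hT, insertPair_of_lt (by omega)]
    have e2 : ptrans μ t = k := by rw [hT, h, insertPair_self]
    have e3 : ptrans μ (t + 1) = k := by rw [hT, h, insertPair_succ_self]
    have e4 : ptrans μ (t + 2) = ptrans (stripTwo μ k) t := by
      rw [hT, h, insertPair_add_two le_rfl]
    have : ptrans μ t ≤ ptrans μ (t - 1) := ptrans_antitone hμ hN (Nat.sub_le t 1)
    have : ptrans μ (t + 2) ≤ ptrans μ (t + 1) := ptrans_antitone hμ hN (by omega)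
    omega
  · rwa [hT, hT, show t + 1 = t - 1 + 2 by omega, insertPair_add_two (by omega),
      insertPair_add_two h.le] at h2

theorem isOrthogonal_ptrans_stripTwo (hμ : Antitone μ) (hN : ∀ j, N ≤ j → μ j = 0)
    (hstep : μ k + 2 ≤ μ (k - 1)) (hμo : IsOrthogonal (ptrans μ)) :
    IsOrthogonal (ptrans (stripTwo μ k)) := by
  intro t ht hte
  have hPN := fun c (hc : stripTwo μ k 0 ≤ c) =>
    ptrans_eq_zero (stripTwo_antitone hμ hstep) (stripTwo_eq_zero hN) hc
  have := hμo t ht hte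
  rw [ptrans_eq_insertPair_ptrans_stripTwo hμ hN hstep, pmult_insertPair hPN ht] at this
  exact (Nat.even_add.mp this).mpr (even_pmult_twoParts ht)

end StripTwo

theorem isUnionOf_of_isCCollapse_stripTwo {μ σ τ : ℕ → ℕ} {m k N : ℕ} (hμ : Antitone μ)
    (hN : ∀ j, N ≤ j → μ j = 0) (hsum : psum μ N = 2 * m + 1) (hk : 0 < k) (hke : Even k)
    (hstep : μ k + 2 ≤ μ (k - 1))
    (hσ : IsCCollapse (2 * (m - k)) (minusOne (ptrans (stripTwo μ k))) σ)
    (hτ : IsCCollapse (2 * m) (minusOne (ptrans μ)) τ) : IsUnionOf τ σ (twoParts k) := by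
  obtain ⟨hkm, hν⟩ := isPartitionOf_stripTwo hμ hN hsum hstep
  have hμP := ptrans_eq_insertPair_ptrans_stripTwo hμ hN hstep
  have hkP : ∀ c < μ k, k < ptrans (stripTwo μ k) c := fun c hc => by
    have := (lt_ptrans_iff hμ hN c k).mpr (by omega)
    rwa [hμP, insertPair_of_lt hc] at this
  have hPq : ptrans (stripTwo μ k) (μ k) ≤ k := by
    have : ptrans μ (μ k + 2) ≤ ptrans μ (μ k + 1) := ptrans_antitone hμ hN (by omega)
    rwa [hμP, insertPair_add_two le_rfl, insertPair_succ_self] at this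
  rw [hμP, show m = m - k + k by omega] at hτ
  exact isUnionOf_of_isCCollapse_minusOne_insertPair (isPartitionOf_ptrans hν) hke hk hkP hPq hσ hτ

/-- `μ` orthogonal partition of `2m+1`, `k > 0` even with
`μ_k ≥ μ_{k+1}+2` (1-based).  Let `ν` be `μ` with the first `k` parts decreased by 2.
Then `ν` is an orthogonal partition of `2(m−k)+1`; if `μ` is special so is `ν`; and if
`σ, τ` are C-collapses of `(νᵗ)⁻, (μᵗ)⁻` then `τ = σ ∪ (k,k)`. -/
theorem stmt12 (m k : ℕ) (μ : ℕ → ℕ) (hk : 0 < k) (hke : Even k)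
    (hμ : IsPartitionOf μ (2*m+1)) (hμo : IsOrthogonal μ)
    (hstep : μ k + 2 ≤ μ (k-1)) :
    (IsPartitionOf (stripTwo μ k) (2*(m-k)+1) ∧ IsOrthogonal (stripTwo μ k)) ∧
    (IsOrthogonal (ptrans μ) → IsOrthogonal (ptrans (stripTwo μ k))) ∧
    ∀ σ τ : ℕ → ℕ,
      IsCCollapse (2*(m-k)) (minusOne (ptrans (stripTwo μ k))) σ →
      IsCCollapse (2*m) (minusOne (ptrans μ)) τ →
      IsUnionOf τ σ (twoParts k) := by
  obtain ⟨hμa, N, hN, hsum⟩ := hμ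
  exact ⟨⟨(isPartitionOf_stripTwo hμa hN hsum hstep).2, isOrthogonal_stripTwo hμa hN hμo hstep⟩,
    isOrthogonal_ptrans_stripTwo hμa hN hstep,
    fun σ τ hσ hτ => isUnionOf_of_isCCollapse_stripTwo hμa hN hsum hk hke hstep hσ hτ⟩
end

section
/- Let λ_1, λ_2 be special orthogonal partitions of odd numbers d_1, d_2, set d = d_1+d_2−1, and assume every nonzero entry of λ_1^t and of λ_2^t is odd. Let k be the largest index with λ_{1,k}+λ_{2,k} > 0, set a_i = λ_{i,k}, let l_i be the largest j ≥ 1 with λ_{i,k−j+1} = λ_{i,k}, and l = min(l_1,l_2); assume l is even. Let λ_i' = (λ_{i,1},…,λ_{i,k−l}) and set δ = 1 if a_1 and a_2 are both odd, and δ = 0 otherwise. Let ξ be the sequence formed from (λ_1,λ_2) with data (ε_1,ε_2,d) = (1,1,d) and ξ' the sequence formed from (λ_1',λ_2') with data (1,1,d') for any d' ≡ d (mod 2). Then ξ_{k−l+1} = δ, ξ_k = −δ, ξ'_{k−l+1} = ξ'_k = 0, and ξ'_j = ξ_j for every j ∉ {k−l+1, k}. -/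
/-- Truncate `f` to its first `m` entries. -/
def truncTo (f : ℕ → ℕ) (m : ℕ) : ℕ → ℕ := fun j => if j < m then f j else 0

/-! The bottom rectangle of `λ₁ + λ₂` has odd height `k`, because `k` is the length of one of
the `λᵢ`, i.e. the first column of `λᵢ^t`, whose nonzero entries are odd.  As `l` is even, its
top row `k - l` has the same (odd) parity, and so has `d`.  Hence at the top row of the
rectangle only the "+1" clause of `ξ` can fire, at its bottom row only the "−1" clause, and
both fire exactly when the common parts are odd.  Strictly inside the rectangle the row sums
are constant, so `ξ` vanishes there.  Truncating at the top row kills `ξ'` from there on (its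
parts are `0`, which is not odd) and changes nothing above, since the strict drop into the
rectangle becomes a strict drop to `0`. -/

lemma Antitone.eq_of_mem_Icc_of_eq {f : ℕ → ℕ} (hf : Antitone f) {a b j : ℕ}
    (ha : a ≤ j) (hb : j ≤ b) (h : f a = f b) : f j = f b :=
  le_antisymm (h ▸ hf ha) (hf hb)

lemma Antitone.add_lt_add_of_ne {f g : ℕ → ℕ} (hf : Antitone f) (hg : Antitone g) {j : ℕ}
    (h : f (j - 1) ≠ f j ∨ g (j - 1) ≠ g j) : f j + g j < f (j - 1) + g (j - 1) := by
  have := hf (Nat.sub_le j 1)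
  have := hg (Nat.sub_le j 1)
  omega

lemma ptrans_zero_of_antitone {f : ℕ → ℕ} (hf : Antitone f) {n : ℕ} (hpos : 0 < f n)
    (hzero : f (n + 1) = 0) : ptrans f 0 = n + 1 := by
  have hset : {j : ℕ | 0 + 1 ≤ f j} = Set.Iio (n + 1) := by
    ext j
    simp only [Set.mem_ofPred_eq, Set.mem_Iio]
    constructor
    · intro h
      by_contra! hj
      have := hf hj
      omega
    · intro hj
      have := hf (Nat.lt_succ_iff.mp hj)
      omega
  rw [ptrans, ← Set.coe_ofPred, hset, ← Finset.coe_range, Nat.card_coe_set_eq,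
    Set.ncard_coe_finset, Finset.card_range]

lemma odd_of_antitone_of_odd_ptrans {f : ℕ → ℕ} (hf : Antitone f)
    (ht : ∀ j, ptrans f j ≠ 0 → Odd (ptrans f j)) {k : ℕ} (hk : 1 ≤ k) (hpos : 0 < f (k - 1))
    (hzero : f k = 0) : Odd k := by
  have hlen : ptrans f 0 = k := by
    rw [ptrans_zero_of_antitone hf hpos (by rwa [Nat.sub_add_cancel hk]), Nat.sub_add_cancel hk]
  exact hlen ▸ ht 0 (by omega)

section xiSeq

variable {f g : ℕ → ℕ} {e1 e2 d j : ℕ}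

lemma xiSeq_eq_of_mod_two_eq {d' : ℕ} (hd : d' % 2 = d % 2) :
    xiSeq f g e1 e2 d' = xiSeq f g e1 e2 d := by
  have hd1 : (d' + 1) % 2 = (d + 1) % 2 := by omega
  funext j
  simp only [xiSeq, hd, hd1]

lemma xiSeq_eq_zero_of_not_odd (h : f j % 2 ≠ 1) : xiSeq f g 1 e2 d j = 0 := by
  simp [xiSeq, h]

lemma xiSeq_eq_zero_of_flat (h0 : j ≠ 0) (habove : f (j - 1) + g (j - 1) = f j + g j)
    (hbelow : f (j + 1) + g (j + 1) = f j + g j) : xiSeq f g e1 e2 d j = 0 := by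
  simp [xiSeq, h0, habove, hbelow]

lemma xiSeq_of_drop_above (hj : (j + 1) % 2 = (d + 1) % 2)
    (hdrop : f j + g j < f (j - 1) + g (j - 1)) :
    xiSeq f g 1 1 d j = if Odd (f j) ∧ Odd (g j) then 1 else 0 := by
  simp only [xiSeq, Nat.odd_iff, hj, hdrop, or_true, and_true, true_and]
  split_ifs <;> omega

lemma xiSeq_of_drop_below (hj : (j + 1) % 2 = d % 2)
    (hdrop : f (j + 1) + g (j + 1) < f j + g j) :
    xiSeq f g 1 1 d j = -(if Odd (f j) ∧ Odd (g j) then 1 else 0) := by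
  simp only [xiSeq, Nat.odd_iff, hj, hdrop, and_true, true_and]
  split_ifs <;> omega

lemma xiSeq_truncTo_of_le {p : ℕ} (hj : p ≤ j) : xiSeq (truncTo f p) g 1 e2 d j = 0 :=
  xiSeq_eq_zero_of_not_odd (by simp [truncTo, Nat.not_lt.mpr hj])

lemma xiSeq_truncTo_of_lt {p : ℕ} (hj : j < p) (hdrop : j + 1 = p → f p + g p < f j + g j) :
    xiSeq (truncTo f p) (truncTo g p) e1 e2 d j = xiSeq f g e1 e2 d j := by
  have hj' : j - 1 < p := by omega
  by_cases hnext : j + 1 < p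
  · simp only [xiSeq, truncTo, hj, hj', hnext, if_true]
  · obtain rfl : j + 1 = p := by omega
    have hpos : 0 < f j + g j := by have := hdrop rfl; omega
    simp only [xiSeq, truncTo, hj, hj', lt_irrefl, if_true, if_false, add_zero, hpos,
      hdrop rfl]

lemma xiSeq_eq_zero_of_rectangle (hf : Antitone f) (hg : Antitone g) {p k : ℕ}
    (hfk : f k = 0) (hfp : f p = f (k - 1)) (hgp : g p = g (k - 1)) (hpj : p < j)
    (hjk : j ≠ k - 1) : xiSeq f g 1 e2 d j = 0 := by
  by_cases hkj : k ≤ j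
  · have := hf hkj
    exact xiSeq_eq_zero_of_not_odd (by omega)
  have hflat {h : ℕ → ℕ} (hh : Antitone h) (hhp : h p = h (k - 1)) (i : ℕ) (hi : p ≤ i)
      (hik : i ≤ k - 1) : h i = h (k - 1) := hh.eq_of_mem_Icc_of_eq hi hik hhp
  apply xiSeq_eq_zero_of_flat (by omega)
  · rw [hflat hf hfp (j - 1) (by omega) (by omega), hflat hg hgp (j - 1) (by omega) (by omega),
      hflat hf hfp j (by omega) (by omega), hflat hg hgp j (by omega) (by omega)]
  · rw [hflat hf hfp (j + 1) (by omega) (by omega), hflat hg hgp (j + 1) (by omega) (by omega),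
      hflat hf hfp j (by omega) (by omega), hflat hg hgp j (by omega) (by omega)]

end xiSeq

theorem stmt16_general (d1 d2 k l1 l2 : ℕ) (hd1 : Odd d1) (hd2 : Odd d2)
    (lam1 lam2 : ℕ → ℕ)
    (h1 : IsPartitionOf lam1 d1)
    (h2 : IsPartitionOf lam2 d2)
    (ht1 : ∀ j, ptrans lam1 j ≠ 0 → Odd (ptrans lam1 j))
    (ht2 : ∀ j, ptrans lam2 j ≠ 0 → Odd (ptrans lam2 j))
    (hk1 : 1 ≤ k) (hkpos : 0 < lam1 (k-1) + lam2 (k-1))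
    (hkmax : lam1 k + lam2 k = 0)
    (hl1a : 1 ≤ l1) (hl1b : l1 ≤ k) (hl1c : lam1 (k - l1) = lam1 (k-1))
    (hl1d : l1 = k ∨ lam1 (k - l1 - 1) ≠ lam1 (k-1))
    (hl2a : 1 ≤ l2) (hl2b : l2 ≤ k) (hl2c : lam2 (k - l2) = lam2 (k-1))
    (hl2d : l2 = k ∨ lam2 (k - l2 - 1) ≠ lam2 (k-1))
    (hleven : Even (min l1 l2)) :
    xiSeq lam1 lam2 1 1 (d1 + d2 - 1) (k - min l1 l2)
        = (if Odd (lam1 (k-1)) ∧ Odd (lam2 (k-1)) then 1 else 0) ∧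
    xiSeq lam1 lam2 1 1 (d1 + d2 - 1) (k - 1)
        = -(if Odd (lam1 (k-1)) ∧ Odd (lam2 (k-1)) then 1 else 0) ∧
    ∀ d' : ℕ, d' % 2 = (d1 + d2 - 1) % 2 →
      xiSeq (truncTo lam1 (k - min l1 l2)) (truncTo lam2 (k - min l1 l2)) 1 1 d'
          (k - min l1 l2) = 0 ∧
      xiSeq (truncTo lam1 (k - min l1 l2)) (truncTo lam2 (k - min l1 l2)) 1 1 d'
          (k - 1) = 0 ∧
      ∀ j, j ≠ k - min l1 l2 → j ≠ k - 1 →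
        xiSeq (truncTo lam1 (k - min l1 l2)) (truncTo lam2 (k - min l1 l2)) 1 1 d' j
          = xiSeq lam1 lam2 1 1 (d1 + d2 - 1) j := by
  obtain ⟨hA1, -⟩ := h1
  obtain ⟨hA2, -⟩ := h2
  set l := min l1 l2
  set p := k - l
  obtain ⟨hz1, hz2⟩ : lam1 k = 0 ∧ lam2 k = 0 := by omega
  have hk : k % 2 = 1 := by
    rw [← Nat.odd_iff]
    rcases Nat.eq_zero_or_pos (lam1 (k - 1)) with h | h
    · exact odd_of_antitone_of_odd_ptrans hA2 ht2 hk1 (by omega) hz2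
    · exact odd_of_antitone_of_odd_ptrans hA1 ht1 hk1 h hz1
  have hd : (d1 + d2 - 1) % 2 = 1 := by obtain ⟨a, rfl⟩ := hd1; obtain ⟨b, rfl⟩ := hd2; omega
  have hp : p % 2 = 1 := by obtain ⟨m, hm⟩ := hleven; omega
  have hp1 : lam1 p = lam1 (k - 1) := hA1.eq_of_mem_Icc_of_eq (by omega) (by omega) hl1c
  have hp2 : lam2 p = lam2 (k - 1) := hA2.eq_of_mem_Icc_of_eq (by omega) (by omega) hl2c
  have htop : lam1 p + lam2 p < lam1 (p - 1) + lam2 (p - 1) := by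
    refine hA1.add_lt_add_of_ne hA2 ?_
    rcases le_total l1 l2 with h | h
    · have hl : p - 1 = k - l1 - 1 := by omega
      refine .inl (hl1d.resolve_left (by omega) ∘ fun h' => ?_)
      rwa [← hl, ← hp1]
    · have hl : p - 1 = k - l2 - 1 := by omega
      refine .inr (hl2d.resolve_left (by omega) ∘ fun h' => ?_)
      rwa [← hl, ← hp2]
  have hbottom : lam1 (k - 1 + 1) + lam2 (k - 1 + 1) < lam1 (k - 1) + lam2 (k - 1) := by
    rwa [Nat.sub_add_cancel hk1, hkmax]
  refine ⟨?_, xiSeq_of_drop_below (by omega) hbottom, fun d' hd' =>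
    ⟨xiSeq_truncTo_of_le le_rfl, xiSeq_truncTo_of_le (by omega), fun j hjp hjk => ?_⟩⟩
  · rw [xiSeq_of_drop_above (by omega) htop, hp1, hp2]
  · rcases Nat.lt_or_gt_of_ne hjp with hj | hj
    · rw [xiSeq_truncTo_of_lt hj (fun h => by rwa [show j = p - 1 by omega]),
        xiSeq_eq_of_mod_two_eq hd']
    · rw [xiSeq_truncTo_of_le hj.le, xiSeq_eq_zero_of_rectangle hA1 hA2 hz1 hp1 hp2 hj hjk]

/-- type B stripping of the bottom rectangle.
`λ₁, λ₂` special orthogonal partitions of odd `d₁, d₂` whose transposes have all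
nonzero entries odd; `k` the largest (1-based) index with `λ_{1,k}+λ_{2,k} > 0`;
`aᵢ = λ_{i,k}`; `lᵢ` the largest `j ≥ 1` with `λ_{i,k−j+1} = λ_{i,k}`;
`l = min(l₁,l₂)` even; `λᵢ' = (λ_{i,1},…,λ_{i,k−l})`;
`δ = 1` iff `a₁, a₂` both odd.  With `ξ` formed from `(λ₁,λ₂)` with data `(1,1,d)`,
`d = d₁+d₂−1`, and `ξ'` formed from `(λ₁',λ₂')` with data `(1,1,d')`, `d' ≡ d (mod 2)`:
`ξ_{k−l+1} = δ`, `ξ_k = −δ`, `ξ'_{k−l+1} = ξ'_k = 0`, and `ξ'_j = ξ_j` for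
`j ∉ {k−l+1, k}`.  (0-based: positions `k−l` and `k−1`.) -/
theorem stmt16 (d1 d2 k l1 l2 : ℕ) (hd1 : Odd d1) (hd2 : Odd d2)
    (lam1 lam2 : ℕ → ℕ)
    (h1 : IsPartitionOf lam1 d1) (h1o : IsOrthogonal lam1)
    (h1s : IsOrthogonal (ptrans lam1))
    (h2 : IsPartitionOf lam2 d2) (h2o : IsOrthogonal lam2)
    (h2s : IsOrthogonal (ptrans lam2))
    (ht1 : ∀ j, ptrans lam1 j ≠ 0 → Odd (ptrans lam1 j))
    (ht2 : ∀ j, ptrans lam2 j ≠ 0 → Odd (ptrans lam2 j))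
    (hk1 : 1 ≤ k) (hkpos : 0 < lam1 (k-1) + lam2 (k-1))
    (hkmax : lam1 k + lam2 k = 0)
    (hl1a : 1 ≤ l1) (hl1b : l1 ≤ k) (hl1c : lam1 (k - l1) = lam1 (k-1))
    (hl1d : l1 = k ∨ lam1 (k - l1 - 1) ≠ lam1 (k-1))
    (hl2a : 1 ≤ l2) (hl2b : l2 ≤ k) (hl2c : lam2 (k - l2) = lam2 (k-1))
    (hl2d : l2 = k ∨ lam2 (k - l2 - 1) ≠ lam2 (k-1))
    (hleven : Even (min l1 l2)) :
    xiSeq lam1 lam2 1 1 (d1 + d2 - 1) (k - min l1 l2)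
        = (if Odd (lam1 (k-1)) ∧ Odd (lam2 (k-1)) then 1 else 0) ∧
    xiSeq lam1 lam2 1 1 (d1 + d2 - 1) (k - 1)
        = -(if Odd (lam1 (k-1)) ∧ Odd (lam2 (k-1)) then 1 else 0) ∧
    ∀ d' : ℕ, d' % 2 = (d1 + d2 - 1) % 2 →
      xiSeq (truncTo lam1 (k - min l1 l2)) (truncTo lam2 (k - min l1 l2)) 1 1 d'
          (k - min l1 l2) = 0 ∧
      xiSeq (truncTo lam1 (k - min l1 l2)) (truncTo lam2 (k - min l1 l2)) 1 1 d'
          (k - 1) = 0 ∧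
      ∀ j, j ≠ k - min l1 l2 → j ≠ k - 1 →
        xiSeq (truncTo lam1 (k - min l1 l2)) (truncTo lam2 (k - min l1 l2)) 1 1 d' j
          = xiSeq lam1 lam2 1 1 (d1 + d2 - 1) j :=
  stmt16_general d1 d2 k l1 l2 hd1 hd2 lam1 lam2 h1 h2 ht1 ht2 hk1 hkpos hkmax hl1a hl1b hl1c hl1d
    hl2a hl2b hl2c hl2d hleven
end
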